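/- arXiv:1806.04250 — 5 statements merged into one kernel-verified Lean document; each statement's English description precedes it below -/
import Mathlib

section
/- If lim_{n→∞} β_n^{1/n} = r > 0 and R > r, then the power series f(z) = Σ_{n≥1} z^n/(n β_n) belongs to H_β but has radius of convergence exactly r, hence does not extend analytically to the disk of radius R. -/
/-!
The `H_β`-norm of `f` is `∑ 1 / n²`. For convergence, the `n`-th root of `|a_n z^n|` is
`‖z‖ / (n β_n)^{1/n}`, which tends to `‖z‖ / r` because `n^{1/n} → 1`; the root test then
gives convergence for `‖z‖ < r` and divergence for `‖z‖ > r`, in particular at `‖z‖ = (r + R) / 2`.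
-/

open Filter Topology

theorem summable_of_tendsto_norm_rpow_inv_lt_one {E : Type*} [NormedAddCommGroup E]
    [CompleteSpace E] {f : ℕ → E} {L : ℝ} (hL : L < 1)
    (hf : Tendsto (fun n : ℕ => ‖f n‖ ^ (n⁻¹ : ℝ)) atTop (𝓝 L)) : Summable f := by
  obtain ⟨s, hLs, hs1⟩ := exists_between (max_lt hL zero_lt_one)
  refine .of_norm_bounded_eventually_nat
    (summable_geometric_of_lt_one (le_of_max_le_right hLs.le) hs1) ?_
  filter_upwards [hf.eventually (eventually_lt_nhds (lt_of_le_of_lt (le_max_left _ _) hLs)),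
    eventually_ne_atTop 0] with n hn hn0
  calc ‖f n‖ = (‖f n‖ ^ (n⁻¹ : ℝ)) ^ n := (Real.rpow_inv_natCast_pow (norm_nonneg _) hn0).symm
    _ ≤ s ^ n := pow_le_pow_left₀ (by positivity) hn.le n

theorem not_summable_of_tendsto_norm_rpow_inv_gt_one {E : Type*} [NormedAddCommGroup E]
    {f : ℕ → E} {L : ℝ} (hL : 1 < L)
    (hf : Tendsto (fun n : ℕ => ‖f n‖ ^ (n⁻¹ : ℝ)) atTop (𝓝 L)) : ¬ Summable f := by
  intro hsum
  have hsmall : ∀ᶠ n in atTop, ‖f n‖ < 1 :=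
    hsum.tendsto_atTop_zero.norm.eventually (eventually_lt_nhds (by simp))
  obtain ⟨n, hn, hn1, hn0⟩ :=
    (hf.eventually (eventually_gt_nhds hL) |>.and (hsmall.and (eventually_ne_atTop 0))).exists
  have hpow := one_lt_pow₀ hn hn0
  rw [Real.rpow_inv_natCast_pow (norm_nonneg _) hn0] at hpow
  linarith

theorem tendsto_natCast_mul_rpow_inv {β : ℕ → ℝ} {r : ℝ} (hβ : ∀ n, 0 ≤ β n)
    (hlim : Tendsto (fun n : ℕ => β n ^ (n⁻¹ : ℝ)) atTop (𝓝 r)) :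
    Tendsto (fun n : ℕ => ((n : ℝ) * β n) ^ (n⁻¹ : ℝ)) atTop (𝓝 r) := by
  have hnat : Tendsto (fun n : ℕ => (n : ℝ) ^ (n⁻¹ : ℝ)) atTop (𝓝 1) := by
    simpa only [one_div, Function.comp_def] using
      tendsto_rpow_div.comp tendsto_natCast_atTop_atTop
  simpa only [Real.mul_rpow (Nat.cast_nonneg _) (hβ _), one_mul] using hnat.mul hlim

theorem tendsto_pow_div_rpow_inv {γ : ℕ → ℝ} {r x : ℝ} (hγ : ∀ n, 0 ≤ γ n) (hr : r ≠ 0)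
    (hx : 0 ≤ x) (hlim : Tendsto (fun n : ℕ => γ n ^ (n⁻¹ : ℝ)) atTop (𝓝 r)) :
    Tendsto (fun n : ℕ => (x ^ n / γ n) ^ (n⁻¹ : ℝ)) atTop (𝓝 (x / r)) := by
  refine ((tendsto_const_nhds (x := x)).div hlim hr).congr' ?_
  filter_upwards [eventually_ne_atTop 0] with n hn
  rw [Real.div_rpow (by positivity) (hγ n), Real.pow_rpow_inv_natCast hx hn]
  rfl

theorem stmt_4 (β : ℕ → ℝ) (r R : ℝ) (hβ : ∀ n, 0 < β n) (hr : 0 < r) (hR : r < R)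
    (hlim : Tendsto (fun n : ℕ => β n ^ ((1 : ℝ) / n)) atTop (nhds r))
    (a : ℕ → ℂ) (ha : ∀ n : ℕ, a n = if n = 0 then 0 else 1 / ((n : ℂ) * (β n : ℂ))) :
    (Summable fun n => ‖a n‖ ^ 2 * β n ^ 2) ∧
    (∀ z : ℂ, ‖z‖ < r → Summable fun n => a n * z ^ n) ∧
    (∀ z : ℂ, r < ‖z‖ → ¬ Summable fun n => a n * z ^ n) ∧
    (∃ z : ℂ, ‖z‖ < R ∧ ¬ Summable fun n => a n * z ^ n) := by
  -- at `n = 0` both sides vanish because `0⁻¹ = 0`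
  have hnorm (n : ℕ) : ‖a n‖ = ((n : ℝ) * β n)⁻¹ := by
    rcases eq_or_ne n 0 with rfl | hn
    · simp [ha]
    · simp [ha, hn, abs_of_pos (hβ n)]
  have hroot (z : ℂ) :
      Tendsto (fun n : ℕ => ‖a n * z ^ n‖ ^ (n⁻¹ : ℝ)) atTop (𝓝 (‖z‖ / r)) := by
    simp only [norm_mul, norm_pow, hnorm, ← div_eq_inv_mul]
    simp only [one_div] at hlim
    exact tendsto_pow_div_rpow_inv (fun n => mul_nonneg n.cast_nonneg (hβ n).le) hr.ne'
      (norm_nonneg z) (tendsto_natCast_mul_rpow_inv (fun n => (hβ n).le) hlim)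
  have hdiv (z : ℂ) (hz : r < ‖z‖) : ¬ Summable fun n => a n * z ^ n :=
    not_summable_of_tendsto_norm_rpow_inv_gt_one ((one_lt_div hr).2 hz) (hroot z)
  refine ⟨?_, fun z hz => summable_of_tendsto_norm_rpow_inv_lt_one ((div_lt_one hr).2 hz)
    (hroot z), hdiv, ⟨((r + R) / 2 : ℝ), ?_, hdiv _ ?_⟩⟩
  · have hterm (n : ℕ) : ‖a n‖ ^ 2 * β n ^ 2 = ((n : ℝ) ^ 2)⁻¹ := by
      rw [hnorm, inv_pow, mul_pow, mul_inv, mul_assoc, inv_mul_cancel₀ (pow_ne_zero 2 (hβ n).ne'),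
        mul_one]
    simpa only [hterm] using Real.summable_nat_pow_inv.2 one_lt_two
  all_goals rw [Complex.norm_real, Real.norm_of_nonneg (by linarith)]; linarith
end

section
/- With weight sequence β satisfying β₀ = 1, β₁² = 1/σ, β_{m+1}² = β_m²(m+1)/(m+σ) (σ > 0), the first-order expression L₁ = (a₂z² + a₁z + a₀)D + σa₂z + b₀ and L₁⁺ = (ā₀z² + ā₁z + ā₂)D + σā₀z + b̄₀ form an adjoint pair: ⟨L₁ z^m, z^n⟩_β = ⟨z^m, L₁⁺ z^n⟩_β for all m,n ≥ 0. -/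
/-- Coefficient sequence of `(A z² + B z + C₀) D (z^m) + s A z^{m+1}-term + b z^m`,
i.e. of `L (z^m)` for `L = (A z² + B z + C₀) D + s A z + b`. -/
noncomputable def Lcoef (A B C₀ b : ℂ) (s : ℝ) (m : ℕ) : ℕ → ℂ := fun k =>
  (if k = m + 1 then (m : ℂ) * A + (s : ℂ) * A else 0) +
  (if k = m then (m : ℂ) * B + b else 0) +
  (if k + 1 = m then (m : ℂ) * C₀ else 0)

theorem stmt_8 (σ : ℝ) (hσ : 0 < σ) (β : ℕ → ℝ) (hβ : ∀ n, 0 < β n)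
    (h0 : β 0 = 1) (h1 : β 1 ^ 2 = 1 / σ)
    (hrec : ∀ m : ℕ, 1 ≤ m → β (m + 1) ^ 2 = β m ^ 2 * ((m : ℝ) + 1) / ((m : ℝ) + σ))
    (a₀ a₁ a₂ b₀ : ℂ) (m n : ℕ) :
    (∑' k : ℕ, Lcoef a₂ a₁ a₀ b₀ σ m k *
        (starRingEnd ℂ) (if k = n then (1 : ℂ) else 0) * ((β k ^ 2 : ℝ) : ℂ)) =
    ∑' k : ℕ, (if k = m then (1 : ℂ) else 0) *
        (starRingEnd ℂ) (Lcoef ((starRingEnd ℂ) a₀) ((starRingEnd ℂ) a₁)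
          ((starRingEnd ℂ) a₂) ((starRingEnd ℂ) b₀) σ n k) * ((β k ^ 2 : ℝ) : ℂ) := by
  have key : ∀ p : ℕ, (β (p + 1) ^ 2 : ℝ) * ((p : ℝ) + σ) = ((p : ℝ) + 1) * β p ^ 2 := by
    intro p
    rcases Nat.eq_zero_or_pos p with hp | hp
    · subst hp
      simp only [Nat.cast_zero, zero_add, h0, h1, one_pow, mul_one]
      field_simp
    · rw [hrec p hp]
      have : (p : ℝ) + σ ≠ 0 := by positivity
      field_simp
  have keyC : ∀ p : ℕ, ((β (p + 1) : ℂ)) ^ 2 * ((p : ℂ) + (σ : ℂ)) =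
      ((p : ℂ) + 1) * ((β p : ℂ)) ^ 2 := by
    intro p
    have := congrArg (Complex.ofReal) (key p)
    push_cast at this
    linear_combination this
  rw [tsum_eq_single n (by intro k hk; simp [hk]),
      tsum_eq_single m (by intro k hk; simp [hk])]
  simp only [if_pos rfl, map_one, mul_one, one_mul, Lcoef, apply_ite (starRingEnd ℂ),
    map_add, map_mul, map_zero, map_natCast, Complex.conj_conj, Complex.conj_ofReal]
  by_cases e1 : n = m + 1
  · subst e1
    have A1 : ¬ (m + 1 = m) := by omega
    have A2 : ¬ (m + 1 + 1 = m) := by omega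
    have A3 : ¬ (m = m + 1 + 1) := by omega
    have A4 : ¬ (m = m + 1) := by omega
    simp only [if_pos rfl, if_neg A1, if_neg A2, if_neg A3, if_neg A4, add_zero, zero_add]
    push_cast
    linear_combination a₂ * keyC m
  by_cases e2 : n = m
  · subst e2
    have A1 : ¬ (n = n + 1) := by omega
    have A2 : ¬ (n + 1 = n) := by omega
    simp only [if_pos rfl, if_neg A1, if_neg A2, add_zero, zero_add]
    push_cast
    ring
  by_cases e3 : m = n + 1
  · subst e3
    have A1 : ¬ (n = n + 1 + 1) := by omega
    have A2 : ¬ (n = n + 1) := by omega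
    have A3 : ¬ (n + 1 = n + 1 + 1) := by omega
    have A4 : ¬ (n + 1 = n) := by omega
    have A5 : ¬ (n + 1 + 1 = n) := by omega
    simp only [if_pos rfl, if_neg A1, if_neg A2, if_neg A3, if_neg A4, if_neg A5,
      add_zero, zero_add]
    push_cast
    linear_combination (-a₀) * keyC n
  · have A1 : ¬ (n + 1 = m) := by omega
    have A2 : ¬ (m = n) := by omega
    have A3 : ¬ (m + 1 = n) := by omega
    simp only [if_neg e1, if_neg e2, if_neg e3, if_neg A1, if_neg A2, if_neg A3,
      add_zero, zero_add]
    ring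
end

section
/- Let τ > 0, C ∈ ℂ, N ≥ 2 an integer, and γ_n = (n/τ + C)^N for n ∈ ℤ. If 2τC is an integer and N is even, then for |n| sufficiently large there is a unique m ≠ n with γ_m = γ_n, namely m = -n - 2τC. -/
/-!
Since `2τC = k` is an integer, `C = k / (2τ)` is real, so `γ_n = x_n ^ N` with `x_n = n/τ + C` real.
For even `N ≠ 0`, `x ^ N = y ^ N` exactly when `x = ± y`, and `x_m = -x_n` exactly when
`m = -n - k`. This second solution differs from `n` as soon as `|n| > |k|`.
-/

lemma even_pow_eq_pow_iff {R : Type*} [Ring R] [LinearOrder R] [IsStrictOrderedRing R]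
    {N : ℕ} (hN : N ≠ 0) (hNe : Even N) {x y : R} :
    x ^ N = y ^ N ↔ x = y ∨ x = -y := by
  simp only [pow_eq_pow_iff_of_ne_zero hN, hNe, and_true]

lemma div_add_eq_neg_div_add_iff {τ c : ℝ} (hτ : τ ≠ 0) (m n : ℝ) :
    m / τ + c = -(n / τ + c) ↔ m = -n - 2 * τ * c := by
  constructor <;> intro h
  · field_simp at h; linarith
  · rw [h]; field_simp; ring

lemma div_add_pow_eq_div_add_pow_iff {τ c : ℝ} (hτ : τ ≠ 0) {N : ℕ} (hN : N ≠ 0) (hNe : Even N)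
    {k : ℤ} (hk : (k : ℝ) = 2 * τ * c) (m n : ℤ) :
    ((m : ℝ) / τ + c) ^ N = ((n : ℝ) / τ + c) ^ N ↔ m = n ∨ m = -n - k := by
  rw [even_pow_eq_pow_iff hN hNe, div_add_eq_neg_div_add_iff hτ, add_left_inj,
    div_left_inj' hτ, ← hk]
  exact or_congr Int.cast_inj (by exact_mod_cast Iff.rfl)

lemma neg_sub_ne_self_of_natAbs_lt {k n : ℤ} (h : k.natAbs < n.natAbs) : -n - k ≠ n := by
  omega

theorem stmt_15 (τ : ℝ) (hτ : 0 < τ) (C : ℂ) (N : ℕ) (hN : 2 ≤ N) (hNe : Even N)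
    (k : ℤ) (hk : (k : ℂ) = 2 * τ * C)
    (γ : ℤ → ℂ) (hγ : ∀ n : ℤ, γ n = ((n : ℂ) / τ + C) ^ N) :
    ∃ n₀ : ℕ, ∀ n : ℤ, n₀ ≤ n.natAbs →
      ((-n - k ≠ n ∧ γ (-n - k) = γ n) ∧
        ∀ m : ℤ, m ≠ n → γ m = γ n → m = -n - k) := by
  obtain ⟨c, hkc⟩ : ∃ c : ℝ, (k : ℝ) = 2 * τ * c := ⟨k / (2 * τ), by field_simp⟩
  have hC : C = c := by
    apply mul_left_cancel₀ (show (2 * τ : ℂ) ≠ 0 by exact_mod_cast (by positivity : 2 * τ ≠ 0))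
    rw [← hk]; exact_mod_cast hkc
  have hγ_iff (m n : ℤ) : γ m = γ n ↔ m = n ∨ m = -n - k := by
    rw [hγ, hγ, hC, ← div_add_pow_eq_div_add_pow_iff hτ.ne' (by omega) hNe hkc]
    exact_mod_cast Iff.rfl
  refine ⟨k.natAbs + 1, fun n hn => ⟨⟨neg_sub_ne_self_of_natAbs_lt hn, ?_⟩, fun m hm hγm => ?_⟩⟩
  · exact (hγ_iff _ _).mpr (Or.inr rfl)
  · exact ((hγ_iff m n).mp hγm).resolve_left hm
end

section
/- Let τ > 0, C ∈ ℂ, N ≥ 2 an integer, and γ_n = (n/τ + C)^N. If either 2τC is not an integer or N is odd, then for |n| sufficiently large there is no m ≠ n with γ_m = γ_n. -/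
/-!
If `a_j = j/τ + C` and `a_m^N = a_n^N` with `m ≠ n`, then `|a_m| = |a_n|` and both points have
imaginary part `Im C`, so `a_m = -conj a_n`. Comparing real parts gives `m + n = -2τ Re C`, which
is impossible unless `2τ Re C` is an integer. In that case `a_n^N = (-conj a_n)^N`, i.e. `a_n` is a
root of `X^N - (-(X + conj C - C))^N`. This polynomial is nonzero when `N` is odd or `Im C ≠ 0`,
and the hypothesis excludes `N` even with `Im C = 0` (then `2τC` would be an integer), so only
finitely many `n` can collide.
-/

open Polynomial ComplexConjugate

theorem Int.exists_le_natAbs_notMem {S : Set ℤ} (hS : S.Finite) :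
    ∃ n₀ : ℕ, ∀ n : ℤ, n₀ ≤ n.natAbs → n ∉ S := by
  obtain ⟨b, hb⟩ := (hS.image Int.natAbs).bddAbove
  refine ⟨b + 1, fun n hn hnS => ?_⟩
  have := hb ⟨n, hnS, rfl⟩
  omega

theorem Polynomial.X_pow_sub_neg_X_add_C_pow_ne_zero {R : Type*} [CommRing R] [IsDomain R]
    [CharZero R] {N : ℕ} (hN : N ≠ 0) {D : R} (h : Odd N ∨ D ≠ 0) :
    (X ^ N - (-(X + C D)) ^ N : R[X]) ≠ 0 := by
  intro h0
  by_cases hD : D = 0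
  · have h1 := congrArg (eval 1) h0
    simp [hD, (h.resolve_right (not_not.2 hD)).neg_pow] at h1
  · have h1 := congrArg (eval 0) h0
    simp [hN, hD] at h1

theorem Complex.isRoot_X_pow_sub_neg_X_add_C_pow {z D : ℂ} {N : ℕ} (hD : conj z = z + D)
    (h : z ^ N = (-conj z) ^ N) : (X ^ N - (-(X + C D)) ^ N).IsRoot z := by
  rw [IsRoot, eval_sub, eval_pow, eval_pow, eval_neg, eval_add, eval_X, eval_C, ← hD, h,
    sub_self]

theorem Complex.eq_neg_conj_of_pow_eq_pow {z w : ℂ} {N : ℕ} (hN : N ≠ 0) (h : z ^ N = w ^ N)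
    (him : z.im = w.im) (hne : z ≠ w) : z = -conj w := by
  have hnorm : ‖z‖ = ‖w‖ :=
    (pow_left_inj₀ (norm_nonneg _) (norm_nonneg _) hN).1 (by rw [← norm_pow, h, norm_pow])
  have hre : z.re * z.re = w.re * w.re := by
    have := congrArg (· ^ 2) hnorm
    simp only [Complex.sq_norm, Complex.normSq_apply, him] at this
    linarith
  rcases mul_self_eq_mul_self_iff.1 hre with hre | hre
  · exact absurd (Complex.ext hre him) hne
  · exact Complex.ext (by simpa using hre) (by simpa using him)

theorem intCast_div_add_injective {τ : ℝ} (hτ : τ ≠ 0) (C : ℂ) :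
    Function.Injective (fun j : ℤ => (j : ℂ) / τ + C) := by
  intro a b hab
  simpa [hτ] using hab

theorem intCast_div_add_eq_neg_conj {τ : ℝ} (hτ : τ ≠ 0) (C : ℂ) {N : ℕ} (hN : N ≠ 0) {m n : ℤ}
    (hmn : m ≠ n) (h : ((m : ℂ) / τ + C) ^ N = ((n : ℂ) / τ + C) ^ N) :
    (m : ℂ) / τ + C = -conj ((n : ℂ) / τ + C) :=
  Complex.eq_neg_conj_of_pow_eq_pow hN h (by simp)
    (fun he => hmn (intCast_div_add_injective hτ C he))

theorem intCast_add_eq_of_div_add_eq_neg_conj {τ : ℝ} (hτ : τ ≠ 0) (C : ℂ) {m n : ℤ}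
    (h : (m : ℂ) / τ + C = -conj ((n : ℂ) / τ + C)) :
    ((m + n : ℤ) : ℝ) = -(2 * τ * C.re) := by
  have hre := congrArg Complex.re h
  simp only [Complex.add_re, Complex.div_ofReal_re, Complex.intCast_re, map_add, map_div₀,
    map_intCast, Complex.conj_ofReal, Complex.neg_re, Complex.conj_re] at hre
  push_cast
  field_simp at hre ⊢
  linarith

theorem stmt_16 (τ : ℝ) (hτ : 0 < τ) (C : ℂ) (N : ℕ) (hN : 2 ≤ N)
    (h : (¬ ∃ k : ℤ, (k : ℂ) = 2 * τ * C) ∨ Odd N)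
    (γ : ℤ → ℂ) (hγ : ∀ n : ℤ, γ n = ((n : ℂ) / τ + C) ^ N) :
    ∃ n₀ : ℕ, ∀ n : ℤ, n₀ ≤ n.natAbs → ∀ m : ℤ, m ≠ n → γ m ≠ γ n := by
  have hN0 : N ≠ 0 := by omega
  have collision {m n : ℤ} (hmn : m ≠ n) (he : γ m = γ n) :
      (m : ℂ) / τ + C = -conj ((n : ℂ) / τ + C) :=
    intCast_div_add_eq_neg_conj hτ.ne' C hN0 hmn (by rwa [hγ, hγ] at he)
  by_cases hk : ∃ k : ℤ, (k : ℝ) = 2 * τ * C.re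
  · obtain ⟨k, hk⟩ := hk
    have hD : Odd N ∨ conj C - C ≠ 0 := by
      refine h.symm.imp_right fun hC hD => hC ⟨k, ?_⟩
      rw [sub_eq_zero, Complex.conj_eq_iff_re] at hD
      rw [← hD, ← Complex.ofReal_intCast, hk]; push_cast; ring
    set P : ℂ[X] := X ^ N - (-(X + Polynomial.C (conj C - C))) ^ N
    have hfin : {n : ℤ | P.IsRoot ((n : ℂ) / τ + C)}.Finite :=
      (P.finite_setOfPred_isRoot (X_pow_sub_neg_X_add_C_pow_ne_zero hN0 hD)).preimage
        (intCast_div_add_injective hτ.ne' C).injOn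
    obtain ⟨n₀, hn₀⟩ := Int.exists_le_natAbs_notMem hfin
    refine ⟨n₀, fun n hn m hmn he => hn₀ n hn ?_⟩
    have hm := collision hmn he
    rw [hγ, hγ, hm] at he
    exact Complex.isRoot_X_pow_sub_neg_X_add_C_pow (by simp) he.symm
  · refine ⟨0, fun n _ m hmn he => hk ⟨-(m + n), ?_⟩⟩
    rw [Int.cast_neg, intCast_add_eq_of_div_add_eq_neg_conj hτ.ne' C (collision hmn he), neg_neg]
end

section
/- Let τ > 0, C ∈ ℂ, N ≥ 2, γ_n = (n/τ + C)^N. There exists K > 0 such that for all n with |n| sufficiently large and all m with γ_m ≠ γ_n, one has |γ_n − γ_m| ≥ K|n|^{N−1}. -/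
open Complex Polynomial ComplexConjugate Finset

/-!
With `a n = n / τ + C`, the roots of unity factor `a n ^ N - a m ^ N = ∏ ζ, (a n - ζ * a m)`.
All `a n` lie on one horizontal line, so for a nonreal root `ζ` the factor is at least
`|ζ.im| * ‖a n‖` up to an additive constant. The real roots `ζ = ±1` give `a n ∓ a m`,
which range over translates of the lattice `τ⁻¹ ℤ` and so are bounded away from `0` when nonzero. For odd `N`
only `ζ = 1` is real and the `N - 1` nonreal factors supply `‖a n‖ ^ (N - 1)`. For even `N`
the missing power comes from `(a n - a m) + (a n + a m) = 2 * a n`: one of the two real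
factors is at least `‖a n‖`.
-/

lemma Finset.exists_pos_forall_le {ι : Type*} (s : Finset ι) (f : ι → ℝ)
    (hf : ∀ i ∈ s, 0 < f i) : ∃ c > 0, ∀ i ∈ s, c ≤ f i := by
  rcases s.eq_empty_or_nonempty with rfl | hs
  · exact ⟨1, one_pos, by simp⟩
  · obtain ⟨i, hi, hmin⟩ := s.exists_min_image f hs
    exact ⟨f i, hf i hi, hmin⟩

lemma exists_pos_le_abs_intCast_add (d : ℝ) :
    ∃ μ > 0, ∀ k : ℤ, (k : ℝ) + d ≠ 0 → μ ≤ |(k : ℝ) + d| := by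
  by_cases hd : ∃ j : ℤ, (j : ℝ) = d
  · obtain ⟨j, rfl⟩ := hd
    refine ⟨1, one_pos, fun k hk => ?_⟩
    have hkj : k + j ≠ 0 := by exact_mod_cast hk
    exact_mod_cast Int.one_le_abs hkj
  · refine ⟨|d - round d|, abs_pos.2 (sub_ne_zero.2 fun h => hd ⟨_, h.symm⟩), fun k _ => ?_⟩
    simpa [abs_sub_comm, add_comm] using round_le d (-k)

lemma Complex.exists_pos_le_norm_intCast_div_add {τ : ℝ} (hτ : 0 < τ) (w : ℂ) :
    ∃ δ > 0, ∀ k : ℤ, (k : ℂ) / τ + w ≠ 0 → δ ≤ ‖(k : ℂ) / τ + w‖ := by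
  by_cases hw : w.im = 0
  · obtain ⟨μ, hμ, hle⟩ := exists_pos_le_abs_intCast_add (τ * w.re)
    have hreal : ∀ k : ℤ, (k : ℂ) / τ + w = (((k + τ * w.re) / τ : ℝ) : ℂ) := by
      intro k
      apply Complex.ext <;> simp [hw]
      field_simp
    refine ⟨μ / τ, by positivity, fun k hk => ?_⟩
    rw [hreal] at hk ⊢
    rw [norm_real, Real.norm_eq_abs, abs_div, abs_of_pos hτ]
    gcongr
    exact hle k fun h => hk (by rw [h]; simp)
  · refine ⟨|w.im|, abs_pos.2 hw, fun k _ => ?_⟩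
    simpa using abs_im_le_norm ((k : ℂ) / τ + w)

lemma Complex.abs_im_mul_norm_sub_le_norm_sub_mul {ζ a b : ℂ} (hζ : ‖ζ‖ = 1)
    (hab : a.im = b.im) : |ζ.im| * ‖a‖ - 3 * |a.im| ≤ ‖a - ζ * b‖ := by
  have hrot : ‖a - ζ * b‖ = ‖conj ζ * a - b‖ := by
    rw [← one_mul ‖a - ζ * b‖, ← hζ, ← norm_conj ζ, ← norm_mul]
    congr 1
    rw [mul_sub, ← mul_assoc, conj_mul', hζ]
    simp
  have him : (conj ζ * a - b).im = ζ.re * a.im - ζ.im * a.re - a.im := by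
    simp [hab]; ring
  have hre1 : |ζ.re| ≤ 1 := hζ ▸ abs_re_le_norm ζ
  have him1 : |ζ.im| ≤ 1 := hζ ▸ abs_im_le_norm ζ
  have h1 := abs_im_le_norm (conj ζ * a - b)
  have h2 := norm_le_abs_re_add_abs_im a
  rw [him] at h1
  rw [hrot]
  have h3 : |ζ.im * a.re| ≤ |ζ.re * a.im - ζ.im * a.re - a.im| + |ζ.re * a.im| + |a.im| := by
    rw [abs_le]
    constructor <;> linarith [le_abs_self (ζ.re * a.im - ζ.im * a.re - a.im),
      neg_abs_le (ζ.re * a.im - ζ.im * a.re - a.im), le_abs_self (ζ.re * a.im),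
      neg_abs_le (ζ.re * a.im), le_abs_self a.im, neg_abs_le a.im]
  rw [abs_mul, abs_mul] at h3
  nlinarith [abs_nonneg ζ.im, abs_nonneg a.im, abs_nonneg a.re]

lemma Complex.eq_one_or_eq_neg_one_of_pow_eq_one {ζ : ℂ} {N : ℕ} (hN : N ≠ 0)
    (hζ : ζ ^ N = 1) (him : ζ.im = 0) : ζ = 1 ∨ ζ = -1 := by
  have hnorm : |ζ.re| = 1 := by
    rw [← norm_eq_one_of_pow_eq_one hζ hN, ← re_add_im ζ, him]
    simp
  rcases abs_eq (zero_le_one' ℝ) |>.1 hnorm with h | h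
  · left; apply Complex.ext <;> simp [h, him]
  · right; apply Complex.ext <;> simp [h, him]

lemma filter_im_eq_zero_nthRootsFinset_of_odd {N : ℕ} (hN : Odd N) :
    (nthRootsFinset N (1 : ℂ)).filter (fun ζ => ζ.im = 0) = {1} := by
  ext ζ
  simp only [mem_filter, mem_nthRootsFinset hN.pos, mem_singleton]
  constructor
  · rintro ⟨hζ, him⟩
    refine (eq_one_or_eq_neg_one_of_pow_eq_one hN.pos.ne' hζ him).resolve_right ?_
    rintro rfl
    rw [hN.neg_one_pow] at hζ
    norm_num at hζ
  · rintro rfl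
    simp

lemma filter_im_eq_zero_nthRootsFinset_of_even {N : ℕ} (hN : Even N) (hN0 : N ≠ 0) :
    (nthRootsFinset N (1 : ℂ)).filter (fun ζ => ζ.im = 0) = {1, -1} := by
  ext ζ
  simp only [mem_filter, mem_nthRootsFinset (Nat.pos_of_ne_zero hN0), mem_insert,
    mem_singleton]
  constructor
  · rintro ⟨hζ, him⟩
    exact eq_one_or_eq_neg_one_of_pow_eq_one hN0 hζ him
  · rintro (rfl | rfl) <;> simp [hN.neg_one_pow]

lemma norm_prod_filter_im_eq_zero_mul_pow_le {N : ℕ} (hN : 0 < N) (a b : ℂ) {L : ℝ}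
    (hL : 0 ≤ L) (h : ∀ ζ ∈ nthRootsFinset N (1 : ℂ), ζ.im ≠ 0 → L ≤ ‖a - ζ * b‖) :
    ‖∏ ζ ∈ (nthRootsFinset N (1 : ℂ)).filter (fun ζ => ζ.im = 0), (a - ζ * b)‖ *
        L ^ (N - #((nthRootsFinset N (1 : ℂ)).filter (fun ζ => ζ.im = 0))) ≤
      ‖a ^ N - b ^ N‖ := by
  have hprim := isPrimitiveRoot_exp N hN.ne'
  have hcard : N - #((nthRootsFinset N (1 : ℂ)).filter (fun ζ => ζ.im = 0)) =
      #((nthRootsFinset N (1 : ℂ)).filter (fun ζ => ¬ζ.im = 0)) := by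
    have := card_filter_add_card_filter_not (s := nthRootsFinset N (1 : ℂ)) (fun ζ => ζ.im = 0)
    rw [hprim.card_nthRootsFinset] at this
    omega
  rw [hprim.pow_sub_pow_eq_prod_sub_mul a b hN, ← prod_filter_mul_prod_filter_not
    (nthRootsFinset N (1 : ℂ)) (fun ζ => ζ.im = 0), norm_mul, hcard]
  simp only [norm_prod]
  gcongr
  rw [← prod_const]
  exact prod_le_prod (fun _ _ => hL) fun ζ hζ => h ζ (mem_filter.1 hζ).1 (mem_filter.1 hζ).2

lemma norm_sub_mul_pow_le_norm_pow_sub_pow_of_odd {N : ℕ} (hN : Odd N) (a b : ℂ) {L : ℝ}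
    (hL : 0 ≤ L) (h : ∀ ζ ∈ nthRootsFinset N (1 : ℂ), ζ.im ≠ 0 → L ≤ ‖a - ζ * b‖) :
    ‖a - b‖ * L ^ (N - 1) ≤ ‖a ^ N - b ^ N‖ := by
  simpa [filter_im_eq_zero_nthRootsFinset_of_odd hN] using
    norm_prod_filter_im_eq_zero_mul_pow_le hN.pos a b hL h

lemma norm_sub_mul_norm_add_mul_pow_le_norm_pow_sub_pow_of_even {N : ℕ} (hN : Even N)
    (hN0 : N ≠ 0) (a b : ℂ) {L : ℝ} (hL : 0 ≤ L)
    (h : ∀ ζ ∈ nthRootsFinset N (1 : ℂ), ζ.im ≠ 0 → L ≤ ‖a - ζ * b‖) :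
    ‖a - b‖ * ‖a + b‖ * L ^ (N - 2) ≤ ‖a ^ N - b ^ N‖ := by
  have hpair : (1 : ℂ) ∉ ({-1} : Finset ℂ) := by norm_num
  simpa [filter_im_eq_zero_nthRootsFinset_of_even hN hN0, prod_insert hpair,
    card_insert_of_notMem hpair, mul_assoc] using
    norm_prod_filter_im_eq_zero_mul_pow_le (Nat.pos_of_ne_zero hN0) a b hL h

lemma Complex.mul_norm_le_norm_sub_mul_norm_add {ε : ℝ} (hε : 0 ≤ ε) {a b : ℂ}
    (hsub : ε ≤ ‖a - b‖) (hadd : ε ≤ ‖a + b‖) : ε * ‖a‖ ≤ ‖a - b‖ * ‖a + b‖ := by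
  have htwo : 2 * ‖a‖ ≤ ‖a - b‖ + ‖a + b‖ := by
    calc 2 * ‖a‖ = ‖(a - b) + (a + b)‖ := by
          rw [show (a - b) + (a + b) = 2 * a by ring, norm_mul]; norm_num
      _ ≤ ‖a - b‖ + ‖a + b‖ := norm_add_le _ _
  rcases le_total ‖a‖ ‖a - b‖ with h | h <;> nlinarith [norm_nonneg a]

lemma exists_pos_mul_norm_pow_le_norm_pow_sub_pow {τ : ℝ} (hτ : 0 < τ) (C : ℂ) {N : ℕ}
    (hN : 0 < N) (a : ℤ → ℂ) (ha : ∀ n : ℤ, a n = (n : ℂ) / τ + C) :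
    ∃ κ > 0, ∃ R, ∀ n m : ℤ, R ≤ ‖a n‖ → a m ^ N ≠ a n ^ N →
      κ * ‖a n‖ ^ (N - 1) ≤ ‖a n ^ N - a m ^ N‖ := by
  obtain ⟨δ₁, hδ₁, hδ₁le⟩ := exists_pos_le_norm_intCast_div_add hτ 0
  obtain ⟨δ₂, hδ₂, hδ₂le⟩ := exists_pos_le_norm_intCast_div_add hτ (2 * C)
  have hsub : ∀ n m, a n - a m ≠ 0 → δ₁ ≤ ‖a n - a m‖ := fun n m => by
    simpa [ha, ← sub_div, sub_add_sub_cancel] using hδ₁le (n - m)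
  have hadd : ∀ n m, a n + a m ≠ 0 → δ₂ ≤ ‖a n + a m‖ := fun n m => by
    have : a n + a m = ((n + m : ℤ) : ℂ) / τ + 2 * C := by rw [ha, ha]; push_cast; ring
    simpa [this] using hδ₂le (n + m)
  obtain ⟨s, hs, hsle⟩ := exists_pos_forall_le ((nthRootsFinset N (1 : ℂ)).filter
    (fun ζ => ζ.im ≠ 0)) (fun ζ => |ζ.im|) fun ζ hζ => abs_pos.2 (mem_filter.1 hζ).2
  have hfactor : ∀ n m, 6 * |C.im| / s ≤ ‖a n‖ → ∀ ζ ∈ nthRootsFinset N (1 : ℂ),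
      ζ.im ≠ 0 → s * ‖a n‖ / 2 ≤ ‖a n - ζ * a m‖ := by
    intro n m hn ζ hζ him
    have hζ1 : ‖ζ‖ = 1 := norm_eq_one_of_pow_eq_one ((mem_nthRootsFinset hN 1).1 hζ) hN.ne'
    have hbound := abs_im_mul_norm_sub_le_norm_sub_mul hζ1 (a := a n) (b := a m)
      (by simp [ha])
    have hsζ : s ≤ |ζ.im| := hsle ζ (mem_filter.2 ⟨hζ, him⟩)
    have him_a : (a n).im = C.im := by simp [ha]
    rw [div_le_iff₀ hs] at hn
    rw [him_a] at hbound
    nlinarith [norm_nonneg (a n)]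
  rcases N.even_or_odd with hev | hodd
  · refine ⟨min δ₁ δ₂ * (s / 2) ^ (N - 2), by positivity, 6 * |C.im| / s, ?_⟩
    intro n m hn hne
    have hne_sub : a n - a m ≠ 0 := fun h => hne (by rw [sub_eq_zero.1 h])
    have hne_add : a n + a m ≠ 0 := fun h => hne (by
      rw [eq_neg_of_add_eq_zero_right h, hev.neg_pow])
    have hpair := mul_norm_le_norm_sub_mul_norm_add (le_min hδ₁.le hδ₂.le)
      ((min_le_left _ _).trans (hsub n m hne_sub)) ((min_le_right _ _).trans (hadd n m hne_add))
    have hN2 : N - 1 = N - 2 + 1 := by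
      obtain ⟨k, hk⟩ := hev; omega
    calc min δ₁ δ₂ * (s / 2) ^ (N - 2) * ‖a n‖ ^ (N - 1)
        = min δ₁ δ₂ * ‖a n‖ * (s * ‖a n‖ / 2) ^ (N - 2) := by rw [hN2]; ring
      _ ≤ ‖a n - a m‖ * ‖a n + a m‖ * (s * ‖a n‖ / 2) ^ (N - 2) := by gcongr
      _ ≤ ‖a n ^ N - a m ^ N‖ :=
        norm_sub_mul_norm_add_mul_pow_le_norm_pow_sub_pow_of_even hev hN.ne' _ _
          (by positivity) (hfactor n m hn)
  · refine ⟨δ₁ * (s / 2) ^ (N - 1), by positivity, 6 * |C.im| / s, ?_⟩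
    intro n m hn hne
    have hne_sub : a n - a m ≠ 0 := fun h => hne (by rw [sub_eq_zero.1 h])
    calc δ₁ * (s / 2) ^ (N - 1) * ‖a n‖ ^ (N - 1)
        = δ₁ * (s * ‖a n‖ / 2) ^ (N - 1) := by ring
      _ ≤ ‖a n - a m‖ * (s * ‖a n‖ / 2) ^ (N - 1) := by gcongr; exact hsub n m hne_sub
      _ ≤ ‖a n ^ N - a m ^ N‖ :=
        norm_sub_mul_pow_le_norm_pow_sub_pow_of_odd hodd _ _ (by positivity) (hfactor n m hn)

theorem stmt_17 (τ : ℝ) (hτ : 0 < τ) (C : ℂ) (N : ℕ) (hN : 2 ≤ N)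
    (γ : ℤ → ℂ) (hγ : ∀ n : ℤ, γ n = ((n : ℂ) / τ + C) ^ N) :
    ∃ K : ℝ, 0 < K ∧ ∃ n₀ : ℕ, ∀ n : ℤ, n₀ ≤ n.natAbs →
      ∀ m : ℤ, γ m ≠ γ n → K * (n.natAbs : ℝ) ^ (N - 1) ≤ ‖γ n - γ m‖ := by
  obtain ⟨κ, hκ, R, hR⟩ := exists_pos_mul_norm_pow_le_norm_pow_sub_pow hτ C
    (by omega : 0 < N) (fun n => (n : ℂ) / τ + C) fun _ => rfl
  refine ⟨κ / (2 * τ) ^ (N - 1), by positivity, ⌈2 * τ * (|R| + ‖C‖)⌉₊, fun n hn m hne => ?_⟩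
  have habs : (n.natAbs : ℝ) = |(n : ℝ)| := by simp
  have hn' : 2 * τ * (|R| + ‖C‖) ≤ |(n : ℝ)| := by
    rw [← habs]; exact (Nat.le_ceil _).trans (by exact_mod_cast hn)
  have hlower : |(n : ℝ)| / τ - ‖C‖ ≤ ‖(n : ℂ) / τ + C‖ := by
    simpa [sub_neg_eq_add, abs_of_pos hτ] using norm_sub_norm_le ((n : ℂ) / τ) (-C)
  have hhalf : |R| + ‖C‖ ≤ |(n : ℝ)| / (2 * τ) := by
    rw [le_div_iff₀ (by positivity)]; linarith
  have htwice : |(n : ℝ)| / τ = 2 * (|(n : ℝ)| / (2 * τ)) := by field_simp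
  rw [hγ, hγ] at hne ⊢
  calc κ / (2 * τ) ^ (N - 1) * (n.natAbs : ℝ) ^ (N - 1)
      = κ * (|(n : ℝ)| / (2 * τ)) ^ (N - 1) := by rw [habs, div_pow]; ring
    _ ≤ κ * ‖(n : ℂ) / τ + C‖ ^ (N - 1) := by gcongr; linarith [abs_nonneg R]
    _ ≤ _ := hR n m (by linarith [le_abs_self R, abs_nonneg R, norm_nonneg C]) hne
end
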